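/- There exists a universal constant C1 > 0 with the following property. Let t be a random variable distributed as log((1/n)·χ²_M) where M = n−j+1 for some 1 ≤ j ≤ n, and let t̄ := t − E[t]. Then for every p ≥ 1: (E[|t̄|^p])^{1/p} ≤ C1·max{ sqrt(p/M), p/M }. -/

import Mathlib

/-!
For `X ~ χ²_M = Γ(M/2, 1/2)` we have `E[(X/M)^t] = (M/2)^(-t) Γ(M/2 + t) / Γ(M/2)`, and
log-convexity of `Γ` bounds this by `5 exp(4t²/M)` for `|t| ≤ M/4`: the variable
`log(X/n) - log(M/n) = log(X/M)` has a sub-gamma moment generating function. Since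
`|u|^p ≤ (p/λ)^p e^{λ|u|}`, tilting with `λ = p / (4 max(√(p/M), p/M))` gives the moment bound
about the point `log(M/n)`, and moving that point to the mean at most doubles the `L^p` distance.
-/

open MeasureTheory ProbabilityTheory Real Set

/-- The chi-squared distribution with `m` degrees of freedom. -/
noncomputable def chiSqMeasure (m : ℕ) : Measure ℝ :=
  ProbabilityTheory.gammaMeasure (m / 2 : ℝ) (1 / 2)

namespace Real

theorem one_add_rpow_le_exp_mul {x y : ℝ} (hx : 0 ≤ x) (hy : 0 ≤ y) :
    (1 + x) ^ y ≤ exp (x * y) := by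
  rw [exp_mul]
  exact rpow_le_rpow (by linarith) (by linarith [add_one_le_exp x]) hy

theorem rpow_le_div_rpow_mul_exp {v p l : ℝ} (hv : 0 ≤ v) (hp : 0 < p) (hl : 0 < l) :
    v ^ p ≤ (p / l) ^ p * exp (l * v) := by
  have hvp : l * v / p ≤ exp (l * v / p) := by linarith [add_one_le_exp (l * v / p)]
  calc v ^ p = (p / l) ^ p * (l * v / p) ^ p := by
        rw [← mul_rpow (by positivity) (by positivity)]
        congr 1
        field_simp
    _ ≤ (p / l) ^ p * exp (l * v / p) ^ p := by gcongr
    _ = (p / l) ^ p * exp (l * v) := by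
        rw [← exp_mul, div_mul_cancel₀ _ hp.ne']

theorem rpow_add_le_mul_rpow_add_rpow {u v p : ℝ} (hu : 0 ≤ u) (hv : 0 ≤ v) (hp : 1 ≤ p) :
    (u + v) ^ p ≤ 2 ^ (p - 1) * (u ^ p + v ^ p) := by
  have h := NNReal.coe_le_coe.2 (NNReal.rpow_add_le_mul_rpow_add_rpow u.toNNReal v.toNNReal hp)
  push_cast at h
  rwa [coe_toNNReal _ hu, coe_toNNReal _ hv] at h

theorem le_one_add_rpow {u p : ℝ} (hu : 0 ≤ u) (hp : 1 ≤ p) : u ≤ 1 + u ^ p := by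
  rcases le_total u 1 with h | h
  · linarith [rpow_nonneg hu p]
  · linarith [self_le_rpow_of_one_le h hp]

theorem rpow_one_div_le_mul {C x p : ℝ} (hC : 1 ≤ C) (hx : 0 ≤ x) (hp : 1 ≤ p) :
    (C * x ^ p) ^ (1 / p) ≤ C * x := by
  rw [mul_rpow (by linarith) (by positivity), ← rpow_mul hx, mul_one_div_cancel (by linarith),
    rpow_one]
  gcongr
  exact rpow_le_self_of_one_le hC (by rw [div_le_one (by linarith)]; exact hp)

theorem log_Gamma_add_sub_le {x t : ℝ} (hx : 0 < x) (ht : 0 < t) :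
    log (Gamma (x + t)) - log (Gamma x) ≤ t * log (x + t) := by
  have hxt : 0 < x + t := by linarith
  -- slopes of the convex `log ∘ Gamma` on `x < x + t < x + t + 1`; the last one is `log (x + t)`
  have h := convexOn_log_Gamma.slope_mono_adjacent (mem_Ioi.2 hx)
    (mem_Ioi.2 (by linarith : 0 < x + t + 1)) (by linarith : x < x + t) (by linarith)
  simp only [Function.comp_apply, Gamma_add_one hxt.ne',
    log_mul hxt.ne' (Gamma_pos_of_pos hxt).ne'] at h
  rwa [add_sub_cancel_left, add_sub_cancel_left, div_one, add_sub_cancel_right,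
    div_le_iff₀ ht, mul_comm] at h

theorem Gamma_add_le_mul_rpow {x t : ℝ} (hx : 0 < x) (ht : 0 ≤ t) :
    Gamma (x + t) ≤ Gamma x * (x + t) ^ t := by
  rcases ht.eq_or_lt with rfl | ht
  · simp
  have hxt : 0 < x + t := by linarith
  rw [← log_le_log_iff (Gamma_pos_of_pos hxt) (by positivity),
    log_mul (Gamma_pos_of_pos hx).ne' (rpow_pos_of_pos hxt t).ne', log_rpow hxt]
  linarith [log_Gamma_add_sub_le hx ht]

theorem Gamma_mul_rpow_le_Gamma_add_of_one_le {x t : ℝ} (hx : 0 < x) (ht : 1 ≤ t) :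
    Gamma x * x ^ t ≤ Gamma (x + t) := by
  have hxt : 0 < x + t := by linarith
  have h := convexOn_log_Gamma.secant_mono (mem_Ioi.2 hx) (mem_Ioi.2 (by linarith : 0 < x + 1))
    (mem_Ioi.2 hxt) (by linarith) (by linarith) (by linarith : x + 1 ≤ x + t)
  simp only [Function.comp_apply, Gamma_add_one hx.ne',
    log_mul hx.ne' (Gamma_pos_of_pos hx).ne'] at h
  rw [add_sub_cancel_right, add_sub_cancel_left, add_sub_cancel_left, div_one,
    le_div_iff₀ (by linarith)] at h
  rw [← log_le_log_iff (by positivity) (Gamma_pos_of_pos hxt),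
    log_mul (Gamma_pos_of_pos hx).ne' (rpow_pos_of_pos hx t).ne', log_rpow hx]
  linarith

theorem Gamma_mul_rpow_mul_div_le_Gamma_add {x t : ℝ} (hx : 0 < x) (ht : 0 ≤ t) :
    Gamma x * x ^ t * (x / (x + 1)) ≤ Gamma (x + t) := by
  have hx1 : 0 < x + 1 := by linarith
  have hfrac : x / (x + 1) ≤ 1 := (div_le_one hx1).2 (by linarith)
  rcases le_total 1 t with ht1 | ht1
  · calc Gamma x * x ^ t * (x / (x + 1)) ≤ Gamma x * x ^ t :=
          mul_le_of_le_one_right (by positivity) hfrac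
      _ ≤ Gamma (x + t) := Gamma_mul_rpow_le_Gamma_add_of_one_le hx ht1
  -- the upper bound at `x + t` gives `Γ(x + 1) ≤ Γ(x + t) (x + 1)^(1 - t)`
  have hxt : 0 < x + t := by linarith
  have h := Gamma_add_le_mul_rpow hxt (by linarith : 0 ≤ 1 - t)
  rw [show x + t + (1 - t) = x + 1 by ring, Gamma_add_one hx.ne'] at h
  have hpow : x ^ t * (x + 1) ^ (1 - t) ≤ x + 1 := by
    calc x ^ t * (x + 1) ^ (1 - t) ≤ (x + 1) ^ t * (x + 1) ^ (1 - t) := by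
          gcongr; linarith
      _ = x + 1 := by rw [← rpow_add hx1]; simp
  rw [← mul_le_mul_iff_of_pos_right (by positivity : 0 < (x + 1) ^ (1 - t))]
  calc Gamma x * x ^ t * (x / (x + 1)) * (x + 1) ^ (1 - t)
      = x * Gamma x * (x ^ t * (x + 1) ^ (1 - t) / (x + 1)) := by ring
    _ ≤ x * Gamma x * 1 := by
        gcongr
        exact (div_le_one hx1).2 hpow
    _ ≤ _ := by rw [mul_one]; exact h

theorem rpow_neg_mul_Gamma_add_div_le_of_nonneg {a t : ℝ} (ha : 0 < a) (ht : 0 ≤ t) :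
    a ^ (-t) * (Gamma (a + t) / Gamma a) ≤ exp (t ^ 2 / a) := by
  calc a ^ (-t) * (Gamma (a + t) / Gamma a) ≤ a ^ (-t) * (a + t) ^ t := by
        gcongr
        rw [div_le_iff₀' (Gamma_pos_of_pos ha)]
        exact Gamma_add_le_mul_rpow ha ht
    _ = (1 + t / a) ^ t := by
        rw [rpow_neg ha.le, ← div_eq_inv_mul, ← div_rpow (by linarith) ha.le, add_div,
          div_self ha.ne']
    _ ≤ exp (t ^ 2 / a) := by
        rw [sq, mul_div_right_comm]
        exact one_add_rpow_le_exp_mul (by positivity) ht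

theorem rpow_mul_Gamma_sub_div_le {a t : ℝ} (ha : 1 / 2 ≤ a) (ht : 0 ≤ t) (hta : t ≤ a / 2) :
    a ^ t * (Gamma (a - t) / Gamma a) ≤ 5 * exp (2 * t ^ 2 / a) := by
  set b := a - t
  have hb0 : 0 < b := by linarith
  have hlow := Gamma_mul_rpow_mul_div_le_Gamma_add hb0 ht
  rw [show b + t = a by ring] at hlow
  calc a ^ t * (Gamma b / Gamma a) ≤ a ^ t * (Gamma b / (Gamma b * b ^ t * (b / (b + 1)))) := by
        gcongr
    _ = (1 + t / b) ^ t * (1 + 1 / b) := by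
        rw [show 1 + t / b = a / b by field_simp; ring, div_rpow (by linarith) hb0.le]
        field_simp
    _ ≤ exp (2 * t ^ 2 / a) * 5 := by
        gcongr
        · calc (1 + t / b) ^ t ≤ exp (t / b * t) := one_add_rpow_le_exp_mul (by positivity) ht
            _ ≤ exp (2 * t ^ 2 / a) := by
                gcongr
                rw [div_mul_eq_mul_div, div_le_div_iff₀ hb0 (by linarith)]
                nlinarith [sq_nonneg t]
        · have : 1 / b ≤ 4 := by rw [div_le_iff₀ hb0]; linarith
          linarith
    _ = 5 * exp (2 * t ^ 2 / a) := mul_comm _ _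

theorem rpow_neg_mul_Gamma_add_div_le {a t : ℝ} (ha : 1 / 2 ≤ a) (ht : |t| ≤ a / 2) :
    a ^ (-t) * (Gamma (a + t) / Gamma a) ≤ 5 * exp (2 * t ^ 2 / a) := by
  rcases le_total 0 t with ht0 | ht0
  · calc a ^ (-t) * (Gamma (a + t) / Gamma a) ≤ exp (t ^ 2 / a) :=
          rpow_neg_mul_Gamma_add_div_le_of_nonneg (by linarith) ht0
      _ ≤ 5 * exp (2 * t ^ 2 / a) := by
          have : exp (t ^ 2 / a) ≤ exp (2 * t ^ 2 / a) := by
            gcongr; nlinarith [sq_nonneg t]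
          linarith [exp_pos (2 * t ^ 2 / a)]
  · have h := rpow_mul_Gamma_sub_div_le ha (neg_nonneg.2 ht0) (by rwa [abs_of_nonpos ht0] at ht)
    rwa [sub_neg_eq_add, neg_sq] at h

end Real

namespace ProbabilityTheory

theorem gammaMeasure_ae_pos (a r : ℝ) : ∀ᵐ z ∂gammaMeasure a r, 0 < z := by
  rw [ae_iff, show {z : ℝ | ¬ 0 < z} = Iic 0 by ext z; simp, gammaMeasure,
    withDensity_apply _ measurableSet_Iic, lintegral_Iic_eq_lintegral_Iio_add_Icc _ le_rfl,
    lintegral_gammaPDF_of_nonpos le_rfl, Icc_self,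
    setLIntegral_measure_zero _ _ volume_singleton, zero_add]

theorem gammaMeasure_eq_withDensity_restrict_Ioi (a r : ℝ) :
    gammaMeasure a r = (volume.restrict (Ioi 0)).withDensity (gammaPDF a r) := by
  rw [← restrict_withDensity measurableSet_Ioi]
  exact (Measure.restrict_eq_self_of_ae_mem (gammaMeasure_ae_pos a r)).symm

theorem integral_rpow_gammaMeasure {a r s : ℝ} (ha : 0 < a) (hr : 0 < r) (hs : 0 < a + s) :
    ∫ x, x ^ s ∂gammaMeasure a r = Gamma (a + s) / (r ^ s * Gamma a) := by
  have hdens : ∀ x ∈ Ioi (0 : ℝ), (gammaPDF a r x).toReal * x ^ s =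
      r ^ a / Gamma a * (x ^ (a + s - 1) * exp (-(r * x))) := by
    intro x hx
    rw [gammaPDF, ENNReal.toReal_ofReal (gammaPDFReal_nonneg ha hr x), gammaPDFReal,
      if_pos (le_of_lt hx), show a + s - 1 = a - 1 + s by ring, rpow_add hx]
    ring
  rw [gammaMeasure_eq_withDensity_restrict_Ioi, integral_withDensity_eq_integral_toReal_smul
    (f := gammaPDF a r) (measurable_gammaPDFReal a r).ennreal_ofReal
    (ae_of_all _ fun _ => ENNReal.ofReal_lt_top)]
  simp only [smul_eq_mul]
  rw [setIntegral_congr_fun measurableSet_Ioi hdens, integral_const_mul,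
    integral_rpow_mul_exp_neg_mul_Ioi hs hr, one_div, inv_rpow hr.le, rpow_add hr]
  field_simp

theorem integrable_rpow_gammaMeasure {a r s : ℝ} (ha : 0 < a) (hr : 0 < r) (hs : 0 < a + s) :
    Integrable (fun x => x ^ s) (gammaMeasure a r) :=
  .of_integral_ne_zero <| by
    rw [integral_rpow_gammaMeasure ha hr hs]
    exact (div_pos (Gamma_pos_of_pos hs) (by positivity [Gamma_pos_of_pos ha])).ne'

theorem integrable_and_integral_exp_mul_log_gammaMeasure {a r s t : ℝ} (ha : 0 < a) (hr : 0 < r)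
    (hs : 0 < s) (hat : 0 < a + t) :
    Integrable (fun x => exp (t * (x - log (a / (r * s)))))
        ((gammaMeasure a r).map fun z => log (z / s)) ∧
      ∫ x, exp (t * (x - log (a / (r * s)))) ∂((gammaMeasure a r).map fun z => log (z / s)) =
        a ^ (-t) * (Gamma (a + t) / Gamma a) := by
  have hlog : Measurable fun z : ℝ => log (z / s) := measurable_log.comp (measurable_id.div_const s)
  have hexp : AEStronglyMeasurable (fun x => exp (t * (x - log (a / (r * s)))))
      ((gammaMeasure a r).map fun z => log (z / s)) := by fun_prop
  have hae : (fun z => exp (t * (log (z / s) - log (a / (r * s))))) =ᵐ[gammaMeasure a r]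
      fun z => (r / a) ^ t * z ^ t := by
    filter_upwards [gammaMeasure_ae_pos a r] with z hz
    rw [← log_div (by positivity) (by positivity), show z / s / (a / (r * s)) = r / a * z by
      field_simp, mul_comm t, ← rpow_def_of_pos (by positivity), mul_rpow (by positivity) hz.le]
  constructor
  · rw [integrable_map_measure hexp hlog.aemeasurable]
    exact ((integrable_rpow_gammaMeasure ha hr hat).const_mul _).congr hae.symm
  · rw [integral_map hlog.aemeasurable hexp, integral_congr_ae hae, integral_const_mul,
      integral_rpow_gammaMeasure ha hr hat, div_rpow hr.le ha.le, rpow_neg ha.le]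
    field_simp

end ProbabilityTheory

theorem chiSqMeasure_map_log_mgf_le {M : ℕ} (hM : 1 ≤ M) {s t : ℝ} (hs : 0 < s)
    (ht : |t| ≤ M / 4) :
    Integrable (fun x => exp (t * (x - log (M / s)))) ((chiSqMeasure M).map fun z => log (z / s)) ∧
      ∫ x, exp (t * (x - log (M / s))) ∂((chiSqMeasure M).map fun z => log (z / s)) ≤
        5 * exp (4 * t ^ 2 / M) := by
  have hM' : (1 : ℝ) ≤ M := by exact_mod_cast hM
  obtain ⟨hint, heq⟩ := integrable_and_integral_exp_mul_log_gammaMeasure (a := M / 2) (r := 1 / 2)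
    (t := t) (by positivity) (by norm_num) hs (by linarith [neg_abs_le t])
  rw [chiSqMeasure, show (M : ℝ) / s = M / 2 / (1 / 2 * s) by field_simp]
  refine ⟨hint, heq.trans_le ?_⟩
  convert rpow_neg_mul_Gamma_add_div_le (a := M / 2) (t := t) (by linarith) (by linarith) using 3
  ring

theorem integral_rpow_abs_sub_le_of_integral_exp_le {ν : Measure ℝ} {c C M q : ℝ}
    (hM : 0 < M) (hq : 0 < q)
    (hmgf : ∀ t, |t| ≤ M / 4 → Integrable (fun x => exp (t * (x - c))) ν ∧
      ∫ x, exp (t * (x - c)) ∂ν ≤ C * exp (4 * t ^ 2 / M)) :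
    Integrable (fun x => |x - c| ^ q) ν ∧
      ∫ x, |x - c| ^ q ∂ν ≤ 2 * C * (4 * exp (1 / 4) * max √(q / M) (q / M)) ^ q := by
  set ε := max √(q / M) (q / M)
  have hε : 0 < ε := lt_max_of_lt_right (by positivity)
  -- `ε ≥ q / M` keeps the tilt admissible, `ε ≥ √(q / M)` keeps `exp (4 l² / M) ≤ exp (q / 4)`
  set l := q / (4 * ε)
  have hl : 0 < l := by positivity
  have hlM : |l| ≤ M / 4 := by
    have h : q ≤ ε * M := (div_le_iff₀ hM).1 (le_max_right _ _)
    rw [abs_of_pos hl, div_le_div_iff₀ (by positivity) (by norm_num)]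
    linarith
  have hlexp : 4 * l ^ 2 / M ≤ q / 4 := by
    have h : q / M ≤ ε ^ 2 := by
      calc q / M = √(q / M) ^ 2 := (sq_sqrt (by positivity)).symm
        _ ≤ ε ^ 2 := by gcongr; exact le_max_left _ _
    rw [div_le_iff₀ hM] at h
    simp only [l]
    field_simp
    nlinarith
  obtain ⟨hintPos, hlePos⟩ := hmgf l hlM
  obtain ⟨hintNeg, hleNeg⟩ := hmgf (-l) (by rwa [abs_neg])
  have hC : 0 ≤ C := (mul_nonneg_iff_of_pos_right (exp_pos _)).1
    ((integral_nonneg fun _ => (exp_pos _).le).trans hlePos)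
  have hpt : ∀ x, |x - c| ^ q ≤ (4 * ε) ^ q * (exp (l * (x - c)) + exp (-l * (x - c))) := by
    intro x
    calc |x - c| ^ q ≤ (q / l) ^ q * exp (l * |x - c|) :=
          rpow_le_div_rpow_mul_exp (abs_nonneg _) hq hl
      _ = (4 * ε) ^ q * exp |l * (x - c)| := by
          rw [div_div_cancel₀ hq.ne', abs_mul, abs_of_pos hl]
      _ ≤ (4 * ε) ^ q * (exp (l * (x - c)) + exp (-l * (x - c))) := by
          gcongr
          simpa only [neg_mul] using exp_abs_le (l * (x - c))
  have hdom : Integrable (fun x => (4 * ε) ^ q * (exp (l * (x - c)) + exp (-l * (x - c)))) ν :=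
    (hintPos.add hintNeg).const_mul _
  have hint : Integrable (fun x => |x - c| ^ q) ν :=
    hdom.mono' ((measurable_id.sub_const c).abs.pow_const q).aestronglyMeasurable
      (ae_of_all _ fun x => by rw [norm_of_nonneg (by positivity)]; exact hpt x)
  refine ⟨hint, ?_⟩
  calc ∫ x, |x - c| ^ q ∂ν
      ≤ ∫ x, (4 * ε) ^ q * (exp (l * (x - c)) + exp (-l * (x - c))) ∂ν :=
        integral_mono hint hdom hpt
    _ = (4 * ε) ^ q * (∫ x, exp (l * (x - c)) ∂ν + ∫ x, exp (-l * (x - c)) ∂ν) := by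
        rw [integral_const_mul, integral_add hintPos hintNeg]
    _ ≤ (4 * ε) ^ q * (C * exp (4 * l ^ 2 / M) + C * exp (4 * (-l) ^ 2 / M)) := by gcongr
    _ ≤ (4 * ε) ^ q * (2 * C * exp (q / 4)) := by
        have := exp_le_exp.2 hlexp
        rw [neg_sq]
        gcongr
        nlinarith
    _ = 2 * C * (4 * exp (1 / 4) * ε) ^ q := by
        rw [mul_right_comm 4 (exp _), mul_rpow (by positivity) (exp_pos _).le, ← exp_mul,
          one_div_mul_eq_div]
        ring

theorem integrable_sub_and_integral_abs_sub_le {ν : Measure ℝ} [IsProbabilityMeasure ν] {c p : ℝ}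
    (hp : 1 ≤ p) (hint : Integrable (fun x => |x - c| ^ p) ν) :
    Integrable (fun x => x - c) ν ∧ ∫ x, |x - c| ∂ν ≤ (∫ x, |x - c| ^ p ∂ν) ^ (1 / p) := by
  have hint₁ : Integrable (fun x => x - c) ν :=
    ((integrable_const 1).add hint).mono' (measurable_id.sub_const c).aestronglyMeasurable
      (ae_of_all _ fun x => le_one_add_rpow (abs_nonneg _) hp)
  refine ⟨hint₁, ?_⟩
  have hjensen : (∫ x, |x - c| ∂ν) ^ p ≤ ∫ x, |x - c| ^ p ∂ν :=
    (convexOn_rpow hp).map_integral_le (continuous_rpow_const (by linarith)).continuousOn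
      isClosed_Ici (ae_of_all _ fun x => abs_nonneg (x - c)) hint₁.abs hint
  calc ∫ x, |x - c| ∂ν = ((∫ x, |x - c| ∂ν) ^ p) ^ (1 / p) := by
        rw [← rpow_mul (integral_nonneg fun x => abs_nonneg _), mul_one_div_cancel (by linarith),
          rpow_one]
    _ ≤ _ := by gcongr

theorem rpow_integral_abs_sub_integral_le {ν : Measure ℝ} [IsProbabilityMeasure ν] {c p : ℝ}
    (hp : 1 ≤ p) (hint : Integrable (fun x => |x - c| ^ p) ν) :
    (∫ x, |x - ∫ y, y ∂ν| ^ p ∂ν) ^ (1 / p) ≤ 2 * (∫ x, |x - c| ^ p ∂ν) ^ (1 / p) := by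
  have hp0 : 0 < p := by linarith
  obtain ⟨hint₁, hL1⟩ := integrable_sub_and_integral_abs_sub_le hp hint
  set K := (∫ x, |x - c| ^ p ∂ν) ^ (1 / p)
  have hK : 0 ≤ K := by positivity
  have hKp : K ^ p = ∫ x, |x - c| ^ p ∂ν := by
    rw [← rpow_mul (integral_nonneg fun x => by positivity), one_div_mul_cancel hp0.ne', rpow_one]
  have hmean : |(∫ y, y ∂ν) - c| ≤ K := by
    have hint₀ : Integrable (fun x : ℝ => x) ν :=
      (hint₁.add (integrable_const c)).congr (ae_of_all _ fun x => sub_add_cancel x c)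
    calc |(∫ y, y ∂ν) - c| = |∫ x, (x - c) ∂ν| := by
          rw [integral_sub hint₀ (integrable_const c), integral_const]
          simp
      _ ≤ ∫ x, |x - c| ∂ν := by
          simpa only [Real.norm_eq_abs] using norm_integral_le_integral_norm (fun x => x - c)
      _ ≤ K := hL1
  have hpt : ∀ x, |x - ∫ y, y ∂ν| ^ p ≤ 2 ^ (p - 1) * (|x - c| ^ p + K ^ p) := by
    intro x
    calc |x - ∫ y, y ∂ν| ^ p ≤ (|x - c| + K) ^ p := by
          gcongr
          calc |x - ∫ y, y ∂ν| ≤ |x - c| + |(∫ y, y ∂ν) - c| := by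
                have h := abs_sub_le x c (∫ y, y ∂ν)
                rwa [abs_sub_comm c] at h
            _ ≤ |x - c| + K := by gcongr
      _ ≤ _ := rpow_add_le_mul_rpow_add_rpow (abs_nonneg _) hK hp
  have hbound : ∫ x, |x - ∫ y, y ∂ν| ^ p ∂ν ≤ (2 * K) ^ p := by
    calc ∫ x, |x - ∫ y, y ∂ν| ^ p ∂ν ≤ ∫ x, 2 ^ (p - 1) * (|x - c| ^ p + K ^ p) ∂ν :=
          integral_mono_of_nonneg (ae_of_all _ fun x => by positivity)
            ((hint.add (integrable_const _)).const_mul _) (ae_of_all _ hpt)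
      _ = 2 ^ (p - 1) * (K ^ p + K ^ p) := by
          rw [integral_const_mul, integral_add hint (integrable_const _), hKp]
          simp
      _ = (2 * K) ^ p := by
          rw [mul_rpow (by norm_num) hK, rpow_sub (by norm_num), rpow_one]
          ring
  calc (∫ x, |x - ∫ y, y ∂ν| ^ p ∂ν) ^ (1 / p) ≤ ((2 * K) ^ p) ^ (1 / p) := by gcongr
    _ = 2 * K := by rw [← rpow_mul (by positivity), mul_one_div_cancel hp0.ne', rpow_one]

/-- Moment bounds for the centered random variable `t̄ = t − E[t]` with
`t ~ log((1/n) χ²_M)`, `M = n − j + 1`: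
`(E|t̄|^p)^{1/p} ≤ C₁ max{√(p/M), p/M}` for all `p ≥ 1`. -/
theorem centered_log_chi_squared_moment_bound :
    ∃ C1 : ℝ, 0 < C1 ∧
      ∀ (n j : ℕ), 1 ≤ j → j ≤ n →
      ∀ p : ℝ, 1 ≤ p →
        (∫ x, |x - ∫ y, y ∂((chiSqMeasure (n - j + 1)).map fun z => Real.log (z / n))| ^ p
            ∂((chiSqMeasure (n - j + 1)).map fun z => Real.log (z / n))) ^ (1 / p)
          ≤ C1 * max (Real.sqrt (p / ((n : ℝ) - j + 1))) (p / ((n : ℝ) - j + 1)) := by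
  refine ⟨80 * exp (1 / 4), by positivity, fun n j hj hjn p hp => ?_⟩
  have hM : (n : ℝ) - j + 1 = ((n - j + 1 : ℕ) : ℝ) := by push_cast [Nat.cast_sub hjn]; ring
  have hn : (0 : ℝ) < n := by exact_mod_cast hj.trans hjn
  rw [hM]
  set M := n - j + 1
  have : IsProbabilityMeasure (chiSqMeasure M) :=
    isProbabilityMeasure_gammaMeasure (by positivity) (by norm_num)
  have : IsProbabilityMeasure ((chiSqMeasure M).map fun z => log (z / n)) :=
    Measure.isProbabilityMeasure_map (by fun_prop)
  obtain ⟨hint, hmom⟩ := integral_rpow_abs_sub_le_of_integral_exp_le (M := M) (by positivity)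
    (by linarith : 0 < p) fun t ht => chiSqMeasure_map_log_mgf_le (by omega) hn ht
  calc _ ≤ 2 * (∫ x, |x - log (M / n)| ^ p
          ∂((chiSqMeasure M).map fun z => log (z / n))) ^ (1 / p) :=
        rpow_integral_abs_sub_integral_le hp hint
    _ ≤ 2 * (10 * (4 * exp (1 / 4) * max √(p / M) (p / M)) ^ p) ^ (1 / p) := by
        gcongr; linarith
    _ ≤ 2 * (10 * (4 * exp (1 / 4) * max √(p / M) (p / M))) := by
        gcongr
        exact rpow_one_div_le_mul (by norm_num) (by positivity) hp
    _ = 80 * exp (1 / 4) * max √(p / M) (p / M) := by ring
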